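/- arXiv:2508.12164 — 2 statements merged into one kernel-verified Lean document; each statement's English description precedes it below -/
import Mathlib

section
/- Let G be a simple undirected graph on vertex set {1, …, n} with edge relation E, and let z ∈ Ω^B. Define the active set A(z) = {i : z_i = 1}, the boundary ∂(z) = {i : z_i = 0 and there exists j with z_j = 1 and {i, j} ∈ E}, and the network-aware set C(z) = {y ∈ Ω^B : for all i, y_i = 1 implies (z_i = 1 or there exists j with z_j = 1 and {i, j} ∈ E)}. Then the refined poll neighborhood used by NaDS satisfies |N(z, 2) ∩ C(z)| = B · |∂(z)| + 1. -/
def OmegaB (n B : ℕ) : Set (Fin n → ℤ) :=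
  {z | (∀ j, z j = 0 ∨ z j = 1) ∧ (∑ j, z j) = B}

def l1dist {n : ℕ} (y z : Fin n → ℤ) : ℤ :=
  ∑ j, |y j - z j|

def Nbhd (n B : ℕ) (z : Fin n → ℤ) (d : ℕ) : Set (Fin n → ℤ) :=
  {y | y ∈ OmegaB n B ∧ l1dist y z ≤ (d : ℤ)}

/-- The boundary of the active set of `z`: inactive nodes adjacent to an active node. -/
def boundary {n : ℕ} (G : SimpleGraph (Fin n)) (z : Fin n → ℤ) : Set (Fin n) :=
  {i | z i = 0 ∧ ∃ j, z j = 1 ∧ G.Adj i j}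

/-- The network-aware set `C(z)` of NaDS. -/
def netAware (n B : ℕ) (G : SimpleGraph (Fin n)) (z : Fin n → ℤ) : Set (Fin n → ℤ) :=
  {y | y ∈ OmegaB n B ∧ ∀ i, y i = 1 → (z i = 1 ∨ ∃ j, z j = 1 ∧ G.Adj i j)}

/-- Swap: deactivate `a`, activate `b`. -/
def swapFun {n : ℕ} (z : Fin n → ℤ) (a b : Fin n) : Fin n → ℤ :=
  fun i => if i = b then 1 else if i = a then 0 else z i

theorem card_refined_poll_neighborhood
    (n B : ℕ) (hB : 0 < B) (hBn : B ≤ n)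
    (G : SimpleGraph (Fin n))
    (z : Fin n → ℤ) (hz : z ∈ OmegaB n B) :
    (Nbhd n B z 2 ∩ netAware n B G z).ncard = B * (boundary G z).ncard + 1 := by
  classical
  obtain ⟨hz01, hzsum⟩ := hz
  set A : Finset (Fin n) := Finset.univ.filter (fun i => z i = 1) with hAdef
  set D : Finset (Fin n) :=
    Finset.univ.filter (fun i => z i = 0 ∧ ∃ j, z j = 1 ∧ G.Adj i j) with hDdef
  have hmemA : ∀ i, i ∈ A ↔ z i = 1 := by
    intro i; simp [hAdef]
  have hmemD : ∀ i, i ∈ D ↔ z i = 0 ∧ ∃ j, z j = 1 ∧ G.Adj i j := by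
    intro i; simp [hDdef]
  have hAcard : (A.card : ℤ) = (B : ℤ) := by
    rw [← hzsum,
      show (∑ j, z j) = ∑ j, if z j = 1 then (1:ℤ) else 0 from
        Finset.sum_congr rfl fun j _ => by rcases hz01 j with h | h <;> simp [h],
      Finset.sum_boole]
  have hAcardN : A.card = B := by exact_mod_cast hAcard
  -- basic facts about swapFun
  have hne : ∀ a ∈ A, ∀ b ∈ D, a ≠ b := by
    intro a ha b hb h
    rw [hmemA] at ha; rw [hmemD] at hb
    rw [h, hb.1] at ha; exact one_ne_zero ha.symm
  have hswap_b : ∀ a b : Fin n, swapFun z a b b = 1 := by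
    intro a b; simp [swapFun]
  have hswap_a : ∀ a b : Fin n, a ≠ b → swapFun z a b a = 0 := by
    intro a b h; simp [swapFun, h]
  have hswap_other : ∀ a b i : Fin n, i ≠ a → i ≠ b → swapFun z a b i = z i := by
    intro a b i h1 h2; simp [swapFun, h1, h2]
  -- the explicit finset
  set S : Finset (Fin n → ℤ) :=
    insert z ((A ×ˢ D).image fun p => swapFun z p.1 p.2) with hSdef
  -- membership in the target set iff membership in S
  have hchar : ∀ y : Fin n → ℤ,
      y ∈ Nbhd n B z 2 ∩ netAware n B G z ↔
        y = z ∨ ∃ a ∈ A, ∃ b ∈ D, y = swapFun z a b := by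
    intro y
    constructor
    · rintro ⟨⟨⟨hy01, hysum⟩, hyl1⟩, _, hnet⟩
      set P : Finset (Fin n) := Finset.univ.filter (fun i => y i = 1 ∧ z i = 0) with hPdef
      set M : Finset (Fin n) := Finset.univ.filter (fun i => y i = 0 ∧ z i = 1) with hMdef
      have hterm : ∀ j, |y j - z j| =
          (if y j = 1 ∧ z j = 0 then (1:ℤ) else 0) +
          (if y j = 0 ∧ z j = 1 then (1:ℤ) else 0) := by
        intro j; rcases hy01 j with h | h <;> rcases hz01 j with h' | h' <;>
          norm_num [h, h']
      have hl1eq : l1dist y z = (P.card : ℤ) + (M.card : ℤ) := by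
        unfold l1dist
        rw [Finset.sum_congr rfl fun j _ => hterm j, Finset.sum_add_distrib,
          Finset.sum_boole, Finset.sum_boole]
      have hterm2 : ∀ j, y j - z j =
          (if y j = 1 ∧ z j = 0 then (1:ℤ) else 0) -
          (if y j = 0 ∧ z j = 1 then (1:ℤ) else 0) := by
        intro j; rcases hy01 j with h | h <;> rcases hz01 j with h' | h' <;>
          norm_num [h, h']
      have hdiff : (P.card : ℤ) - (M.card : ℤ) = 0 := by
        have : ∑ j, (y j - z j) = (P.card : ℤ) - (M.card : ℤ) := by
          rw [Finset.sum_congr rfl fun j _ => hterm2 j, Finset.sum_sub_distrib,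
            Finset.sum_boole, Finset.sum_boole]
        rw [← this, Finset.sum_sub_distrib, hysum, hzsum, sub_self]
      have hPM : P.card = M.card := by
        have := sub_eq_zero.mp hdiff; exact_mod_cast this
      have hPle : P.card ≤ 1 := by
        have h2 : (P.card : ℤ) + (M.card : ℤ) ≤ 2 := by rw [← hl1eq]; exact_mod_cast hyl1
        omega
      interval_cases hPc : P.card
      · -- y = z
        left
        have hM0 : M.card = 0 := by omega
        have hPe : P = ∅ := Finset.card_eq_zero.mp hPc
        have hMe : M = ∅ := Finset.card_eq_zero.mp hM0
        funext j
        have hjP : ¬ (y j = 1 ∧ z j = 0) := by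
          intro h; have : j ∈ P := by simp [hPdef, h]
          rw [hPe] at this; exact absurd this (Finset.notMem_empty j)
        have hjM : ¬ (y j = 0 ∧ z j = 1) := by
          intro h; have : j ∈ M := by simp [hMdef, h]
          rw [hMe] at this; exact absurd this (Finset.notMem_empty j)
        rcases hy01 j with h | h <;> rcases hz01 j with h' | h' <;>
          simp [h, h'] at hjP hjM ⊢
      · -- swap case
        right
        have hM1 : M.card = 1 := by omega
        obtain ⟨b, hbP⟩ := Finset.card_eq_one.mp hPc
        obtain ⟨a, haM⟩ := Finset.card_eq_one.mp hM1
        have hbmem : y b = 1 ∧ z b = 0 := by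
          have : b ∈ P := by rw [hbP]; exact Finset.mem_singleton_self b
          simpa [hPdef] using this
        have hamem : y a = 0 ∧ z a = 1 := by
          have : a ∈ M := by rw [haM]; exact Finset.mem_singleton_self a
          simpa [hMdef] using this
        have hbD : b ∈ D := by
          rw [hmemD]
          refine ⟨hbmem.2, ?_⟩
          rcases hnet b hbmem.1 with h | h
          · rw [hbmem.2] at h; exact absurd h (by norm_num)
          · exact h
        refine ⟨a, (hmemA a).mpr hamem.2, b, hbD, ?_⟩
        have hab : a ≠ b := fun h => by rw [h, hbmem.2] at hamem; exact one_ne_zero hamem.2.symm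
        funext i
        by_cases h1 : i = b
        · rw [h1, hswap_b, hbmem.1]
        · by_cases h2 : i = a
          · rw [h2, hswap_a a b hab, hamem.1]
          · rw [hswap_other a b i h2 h1]
            have hiP : ¬ (y i = 1 ∧ z i = 0) := by
              intro h; have : i ∈ P := by simp [hPdef, h]
              rw [hbP] at this; exact h1 (Finset.mem_singleton.mp this)
            have hiM : ¬ (y i = 0 ∧ z i = 1) := by
              intro h; have : i ∈ M := by simp [hMdef, h]
              rw [haM] at this; exact h2 (Finset.mem_singleton.mp this)
            rcases hy01 i with h | h <;> rcases hz01 i with h' | h' <;>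
              simp [h, h'] at hiP hiM ⊢
    · rintro (rfl | ⟨a, ha, b, hb, rfl⟩)
      · refine ⟨⟨⟨hz01, hzsum⟩, ?_⟩, ⟨hz01, hzsum⟩, fun i hi => Or.inl hi⟩
        unfold l1dist; simp
      · have hab := hne a ha b hb
        rw [hmemA] at ha; rw [hmemD] at hb
        have hsum : (∑ j, swapFun z a b j) = (B : ℤ) := by
          have : ∀ j, swapFun z a b j =
              z j + (if j = b then (1:ℤ) else 0) - (if j = a then (1:ℤ) else 0) := by
            intro j
            by_cases h1 : j = b
            · simp [swapFun, h1, hb.1, (Ne.symm hab)]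
            · by_cases h2 : j = a
              · simp [swapFun, h2, ha, hab]
              · simp [swapFun, h1, h2]
          rw [Finset.sum_congr rfl fun j _ => this j]
          rw [Finset.sum_sub_distrib, Finset.sum_add_distrib]
          simp [Finset.sum_ite_eq', hzsum]
        have h01 : ∀ j, swapFun z a b j = 0 ∨ swapFun z a b j = 1 := by
          intro j
          by_cases h1 : j = b
          · right; rw [h1]; exact hswap_b a b
          · by_cases h2 : j = a
            · left; rw [h2]; exact hswap_a a b hab
            · rw [hswap_other a b j h2 h1]; exact hz01 j
        have hl1 : l1dist (swapFun z a b) z = 2 := by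
          unfold l1dist
          have : ∀ j, |swapFun z a b j - z j| =
              (if j = b then (1:ℤ) else 0) + (if j = a then (1:ℤ) else 0) := by
            intro j
            by_cases h1 : j = b
            · rw [h1]; norm_num [hswap_b, hb.1, Ne.symm hab]
            · by_cases h2 : j = a
              · rw [h2]; norm_num [hswap_a a b hab, ha, hab]
              · simp [hswap_other a b j h2 h1, h1, h2]
          rw [Finset.sum_congr rfl fun j _ => this j, Finset.sum_add_distrib]
          simp [Finset.sum_ite_eq']
        refine ⟨⟨⟨h01, hsum⟩, le_of_eq hl1⟩, ⟨h01, hsum⟩, fun i hi => ?_⟩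
        by_cases h1 : i = b
        · exact Or.inr (h1 ▸ hb.2)
        · by_cases h2 : i = a
          · exfalso; rw [h2, hswap_a a b hab] at hi; exact zero_ne_one hi
          · rw [hswap_other a b i h2 h1] at hi; exact Or.inl hi
  -- the target set equals ↑S
  have hseteq : Nbhd n B z 2 ∩ netAware n B G z = ↑S := by
    ext y
    rw [hchar y, hSdef]
    simp only [Finset.coe_insert, Set.mem_insert_iff, Finset.coe_image, Set.mem_image,
      Finset.mem_coe, Finset.mem_product]
    constructor
    · rintro (rfl | ⟨a, ha, b, hb, rfl⟩)
      · exact Or.inl rfl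
      · exact Or.inr ⟨(a, b), ⟨ha, hb⟩, rfl⟩
    · rintro (rfl | ⟨⟨a, b⟩, ⟨ha, hb⟩, rfl⟩)
      · exact Or.inl rfl
      · exact Or.inr ⟨a, ha, b, hb, rfl⟩
  -- boundary equals ↑D
  have hbd : boundary G z = ↑D := by
    ext i; simp [boundary, hDdef]
  -- z is not a swap
  have hznot : z ∉ (A ×ˢ D).image fun p => swapFun z p.1 p.2 := by
    intro h
    obtain ⟨⟨a, b⟩, hab, heq⟩ := Finset.mem_image.mp h
    have hb : b ∈ D := (Finset.mem_product.mp hab).2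
    rw [hmemD] at hb
    have h2 : swapFun z a b b = z b := congrFun heq b
    rw [hswap_b a b, hb.1] at h2
    exact one_ne_zero h2
  -- injectivity
  have hinj : Set.InjOn (fun p : Fin n × Fin n => swapFun z p.1 p.2) ↑(A ×ˢ D) := by
    rintro ⟨a, b⟩ hab ⟨a', b'⟩ hab' heq
    simp only [Finset.coe_product, Set.mem_prod, Finset.mem_coe] at hab hab'
    have hzb : z b = 0 := ((hmemD b).mp hab.2).1
    have hzb' : z b' = 0 := ((hmemD b').mp hab'.2).1
    have hza : z a = 1 := (hmemA a).mp hab.1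
    have hza' : z a' = 1 := (hmemA a').mp hab'.1
    have hne1 : a ≠ b := hne a hab.1 b hab.2
    have hne2 : a' ≠ b' := hne a' hab'.1 b' hab'.2
    have hbb : b = b' := by
      by_contra hbb
      have this : swapFun z a b b = swapFun z a' b' b := congrFun heq b
      rw [hswap_b a b] at this
      by_cases h : b = a'
      · rw [show swapFun z a' b' b = 0 from by rw [h]; exact hswap_a a' b' hne2] at this
        exact one_ne_zero this
      · rw [hswap_other a' b' b h hbb, hzb] at this
        exact one_ne_zero this
    have haa : a = a' := by
      by_contra haa
      have this : swapFun z a b a = swapFun z a' b' a := congrFun heq a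
      rw [hswap_a a b hne1] at this
      by_cases h : a = b'
      · rw [show swapFun z a' b' a = 1 from by rw [h]; exact hswap_b a' b'] at this
        exact zero_ne_one this
      · rw [hswap_other a' b' a haa h, hza] at this
        exact zero_ne_one this
    rw [haa, hbb]
  -- count
  rw [hseteq, hbd, Set.ncard_coe_finset, Set.ncard_coe_finset, hSdef,
    Finset.card_insert_of_notMem hznot, Finset.card_image_of_injOn hinj,
    Finset.card_product, hAcardN]
end

section
/- Let n ≥ 1, let B ∈ ℕ with 1 ≤ B ≤ n, let l, h ∈ ℝ^n satisfy 0 < l_j ≤ h_j for all j, and let s : ℝ^n → ℝ be nondecreasing with respect to the componentwise order (x ≤ y componentwise implies s(x) ≤ s(y)). Consider the mixed-integer feasible set F = {(x, z) : z ∈ {0,1}^n, ∑_j z_j ≤ B, and for all j, l_j·z_j ≤ x_j ≤ h_j·z_j}. Then the supremum of s(x) over (x, z) ∈ F is attained and equals the maximum of s(h ⊙ z) over z ∈ Ω^B, where (h ⊙ z)_j = h_j·z_j is the componentwise (Hadamard) product. -/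
/-- The feasible domain Ω^B over the reals: binary vectors with exactly `B` ones. -/
def OmegaR (n B : ℕ) : Set (Fin n → ℝ) :=
  {z | (∀ j, z j = 0 ∨ z j = 1) ∧ (∑ j, z j) = B}

theorem minlp_reduction
    (n B : ℕ) (hn : 1 ≤ n) (hB : 1 ≤ B) (hBn : B ≤ n)
    (l h : Fin n → ℝ) (hl : ∀ j, 0 < l j) (hlh : ∀ j, l j ≤ h j)
    (s : (Fin n → ℝ) → ℝ)
    (hs : ∀ x y : Fin n → ℝ, (∀ j, x j ≤ y j) → s x ≤ s y) :
    ∃ zstar ∈ OmegaR n B,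
      (∀ z ∈ OmegaR n B, s (fun j => h j * z j) ≤ s (fun j => h j * zstar j)) ∧
      IsGreatest
        {r : ℝ | ∃ x z : Fin n → ℝ,
          (∀ j, z j = 0 ∨ z j = 1) ∧
          (∑ j, z j) ≤ B ∧
          (∀ j, l j * z j ≤ x j ∧ x j ≤ h j * z j) ∧
          r = s x}
        (s (fun j => h j * zstar j)) := by
  classical
  have hh : ∀ j, 0 ≤ h j := fun j => le_trans (hl j).le (hlh j)
  set ind : Finset (Fin n) → (Fin n → ℝ) := fun A j => if j ∈ A then 1 else 0 with hind
  have sum_ind : ∀ A : Finset (Fin n), (∑ j, ind A j) = (A.card : ℝ) := by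
    intro A
    simp [ind]
  have mem_ind : ∀ A : Finset (Fin n), A.card = B → ind A ∈ OmegaR n B := by
    intro A hA
    refine ⟨fun j => ?_, by rw [sum_ind, hA]⟩
    by_cases hj : j ∈ A <;> simp [ind, hj]
  -- the representation of binary vectors
  have repr : ∀ z : Fin n → ℝ, (∀ j, z j = 0 ∨ z j = 1) →
      z = ind (Finset.univ.filter fun j => z j = 1) := by
    intro z hz
    funext j
    rcases hz j with h0 | h1
    · simp [ind, h0]
    · simp [ind, h1]
  have repr_sum : ∀ z : Fin n → ℝ, (∀ j, z j = 0 ∨ z j = 1) →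
      (∑ j, z j) = ((Finset.univ.filter fun j => z j = 1).card : ℝ) := by
    intro z hz
    calc (∑ j, z j) = ∑ j, ind (Finset.univ.filter fun j => z j = 1) j :=
          Finset.sum_congr rfl (fun j _ => congrFun (repr z hz) j)
      _ = _ := sum_ind _
  -- nonempty finite set of candidate supports
  have hne : (Finset.powersetCard B (Finset.univ : Finset (Fin n))).Nonempty := by
    obtain ⟨t, ht, hcard⟩ := Finset.exists_subset_card_eq
      (s := (Finset.univ : Finset (Fin n))) (n := B) (by simpa using hBn)
    exact ⟨t, Finset.mem_powersetCard.2 ⟨ht, hcard⟩⟩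
  obtain ⟨Astar, hAstar, hmax⟩ :=
    Finset.exists_max_image (Finset.powersetCard B (Finset.univ : Finset (Fin n)))
      (fun A => s (fun j => h j * ind A j)) hne
  have hAstarcard : Astar.card = B := (Finset.mem_powersetCard.1 hAstar).2
  refine ⟨ind Astar, mem_ind Astar hAstarcard, ?_, ?_, ?_⟩
  · -- maximality over OmegaR
    intro z hz
    have hz1 := hz.1
    have hA : (Finset.univ.filter fun j => z j = 1).card = B := by
      have := repr_sum z hz1
      have h2 : ((Finset.univ.filter fun j => z j = 1).card : ℝ) = (B : ℝ) := by
        rw [← this]; exact hz.2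
      exact_mod_cast h2
    have := hmax (Finset.univ.filter fun j => z j = 1)
      (Finset.mem_powersetCard.2 ⟨Finset.subset_univ _, hA⟩)
    calc s (fun j => h j * z j)
        = s (fun j => h j * ind (Finset.univ.filter fun j => z j = 1) j) := by
          rw [← repr z hz1]
      _ ≤ s (fun j => h j * ind Astar j) := this
  · -- membership in the feasible-value set
    refine ⟨fun j => h j * ind Astar j, ind Astar, (mem_ind Astar hAstarcard).1, ?_, ?_, rfl⟩
    · rw [sum_ind, hAstarcard]
    · intro j
      have hz0 : (0:ℝ) ≤ ind Astar j := by by_cases hj : j ∈ Astar <;> simp [ind, hj]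
      exact ⟨mul_le_mul_of_nonneg_right (hlh j) hz0, le_refl _⟩
  · -- upper bound
    rintro r ⟨x, z, hz1, hzsum, hbox, rfl⟩
    set A := Finset.univ.filter fun j => z j = 1 with hA
    have hAcard : A.card ≤ B := by
      have := repr_sum z hz1
      have h2 : ((A.card : ℕ) : ℝ) ≤ (B : ℝ) := by rw [← this]; exact hzsum
      exact_mod_cast h2
    obtain ⟨A', hAA', hA'card⟩ :=
      Finset.exists_superset_card_eq hAcard (by simpa using hBn)
    have step1 : s x ≤ s (fun j => h j * ind A' j) := by
      apply hs
      intro j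
      rcases hz1 j with h0 | h1
      · have hx : x j ≤ 0 := by have := (hbox j).2; rw [h0] at this; linarith
        have : (0:ℝ) ≤ h j * ind A' j := by
          apply mul_nonneg (hh j)
          by_cases hj : j ∈ A' <;> simp [ind, hj]
        linarith
      · have hjA : j ∈ A := by simp [hA, h1]
        have hjA' : j ∈ A' := hAA' hjA
        have := (hbox j).2
        rw [h1] at this
        simpa [ind, hjA'] using this
    have step2 : s (fun j => h j * ind A' j) ≤ s (fun j => h j * ind Astar j) :=
      hmax A' (Finset.mem_powersetCard.2 ⟨Finset.subset_univ _, hA'card⟩)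
    linarith
end
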